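/- arXiv:2409.16906 — 8 statements merged into one kernel-verified Lean document; each statement's English description precedes it below -/
import Mathlib

section
/- Let A be a unital subalgebra of M_n containing all diagonal matrices. Define ρ to be the union over all A ∈ A of the supports of A (where the support of a matrix is the set of index pairs where its entries are nonzero). Then ρ is a reflexive and transitive relation on {1,...,n}, and A equals the span of the matrix units E_{ij} with (i,j) ∈ ρ. -/
open Matrix

lemma key_mul {n : ℕ} (X : Matrix (Fin n) (Fin n) ℂ) (i j : Fin n) :
    Matrix.single i i 1 * X * Matrix.single j j 1
      = X i j • Matrix.single i j 1 := by
  ext a b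
  rcases eq_or_ne a i with rfl | ha
  · rcases eq_or_ne b j with rfl | hb
    · simp [mul_comm]
    · simp [Matrix.mul_single_apply_of_ne (hbj := hb), hb, Matrix.single_apply_of_col_ne _ _ (Ne.symm hb)]
  · rw [Matrix.mul_assoc]
    simp [Matrix.single_mul_apply_of_ne (h := ha), Ne.symm ha]

lemma std_diag {n : ℕ} (i : Fin n) :
    Matrix.single i i (1 : ℂ) = Matrix.diagonal (fun k => if k = i then 1 else 0) := by
  ext a b
  simp [Matrix.single, Matrix.diagonal]
  aesop

theorem stmt_1 {n : ℕ} (A : Subalgebra ℂ (Matrix (Fin n) (Fin n) ℂ))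
    (hdiag : ∀ d : Fin n → ℂ, Matrix.diagonal d ∈ A)
    (ρ : Fin n → Fin n → Prop)
    (hρ : ∀ i j, ρ i j ↔ ∃ X ∈ A, X i j ≠ 0) :
    (∀ i, ρ i i) ∧ (∀ i j k, ρ i j → ρ j k → ρ i k) ∧
      A.toSubmodule =
        Submodule.span ℂ {M : Matrix (Fin n) (Fin n) ℂ |
          ∃ i j, ρ i j ∧ M = Matrix.single i j (1 : ℂ)} := by
  have hstd : ∀ i : Fin n, Matrix.single i i (1 : ℂ) ∈ A := fun i => by
    rw [std_diag]; exact hdiag _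
  -- if ρ i j then E_ij ∈ A
  have hE : ∀ i j, ρ i j → Matrix.single i j (1 : ℂ) ∈ A := by
    intro i j hij
    obtain ⟨X, hX, hXij⟩ := (hρ i j).1 hij
    have h : Matrix.single i i 1 * X * Matrix.single j j 1 ∈ A :=
      A.mul_mem (A.mul_mem (hstd i) hX) (hstd j)
    rw [key_mul] at h
    have := A.smul_mem h (X i j)⁻¹
    rwa [smul_smul, inv_mul_cancel₀ hXij, one_smul] at this
  refine ⟨fun i => (hρ i i).2 ⟨1, A.one_mem, by simp⟩, ?_, ?_⟩
  · intro i j k hij hjk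
    obtain ⟨X, hX, hXij⟩ := (hρ i j).1 hij
    obtain ⟨Y, hY, hYjk⟩ := (hρ j k).1 hjk
    refine (hρ i k).2 ⟨(X i j • Matrix.single i j 1) * (Y j k • Matrix.single j k 1), ?_, ?_⟩
    · rw [← key_mul, ← key_mul]
      exact A.mul_mem (A.mul_mem (A.mul_mem (hstd i) hX) (hstd j))
        (A.mul_mem (A.mul_mem (hstd j) hY) (hstd k))
    · simp [Matrix.mul_apply, Matrix.single, hXij, hYjk]
  · apply le_antisymm
    · intro X hX
      rw [Matrix.matrix_eq_sum_single X]
      apply Submodule.sum_mem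
      intro i _
      apply Submodule.sum_mem
      intro j _
      by_cases h : X i j = 0
      · simp [h]
      · have heq : Matrix.single i j (X i j) = X i j • Matrix.single i j (1 : ℂ) := by
          rw [Matrix.smul_single, smul_eq_mul, mul_one]
        rw [heq]
        exact Submodule.smul_mem _ _ (Submodule.subset_span ⟨i, j, (hρ i j).2 ⟨X, hX, h⟩, rfl⟩)
    · rw [Submodule.span_le]
      rintro M ⟨i, j, hij, rfl⟩
      exact hE i j hij
end

section
/- Let P ⊆ T_n be a family of mutually orthogonal nonzero idempotent upper-triangular matrices summing to the identity. Define T ∈ T_n by T_{ij} := P_{ij} for 1 ≤ i ≤ j ≤ n, where P ∈ P is the unique idempotent with P_{jj} = 1. Then T is invertible and T^{-1}PT is diagonal for every P ∈ P. -/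
open Matrix

theorem stmt_4 {n : ℕ} {ι : Type*} [Fintype ι]
    (P : ι → Matrix (Fin n) (Fin n) ℂ)
    (hupper : ∀ k, (P k).BlockTriangular (id : Fin n → Fin n))
    (hidem : ∀ k, P k * P k = P k)
    (hne : ∀ k, P k ≠ 0)
    (horth : ∀ k l, k ≠ l → P k * P l = 0)
    (hsum : ∑ k, P k = 1)
    (c : Fin n → ι) (hc : ∀ j, P (c j) j j = 1)
    (T : Matrix (Fin n) (Fin n) ℂ)
    (hT : ∀ i j, T i j = P (c j) i j) :
    IsUnit T ∧ ∀ k, (T⁻¹ * P k * T).IsDiag := by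
  classical
  have hTu : T.BlockTriangular (id : Fin n → Fin n) := by
    intro i j hij
    rw [hT]
    exact hupper (c j) hij
  have hdet : T.det = 1 := by
    rw [Matrix.det_of_upperTriangular hTu]
    have : ∀ j, T j j = 1 := fun j => by rw [hT]; exact hc j
    simp [this]
  have hdetu : IsUnit T.det := by rw [hdet]; exact isUnit_one
  refine ⟨(Matrix.isUnit_iff_isUnit_det T).2 hdetu, fun k => ?_⟩
  have key : P k * T = T * Matrix.diagonal (fun j => if c j = k then (1:ℂ) else 0) := by
    ext i j
    rw [Matrix.mul_apply, Matrix.mul_diagonal]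
    have hPT : ∑ l, P k i l * T l j = (P k * P (c j)) i j := by
      rw [Matrix.mul_apply]
      exact Finset.sum_congr rfl fun l _ => by rw [hT]
    by_cases h : c j = k
    · subst h
      rw [if_pos rfl, mul_one, hPT, hidem, hT]
    · rw [if_neg h, mul_zero, hPT, horth k (c j) (fun hh => h hh.symm)]
      rfl
  rw [Matrix.mul_assoc, key, ← Matrix.mul_assoc, Matrix.nonsing_inv_mul T hdetu,
    Matrix.one_mul]
  exact Matrix.isDiag_diagonal _
end

section
/- Let A_ρ ⊆ M_n be a structural matrix algebra and let F ⊆ A_ρ be a commuting family of diagonalizable matrices. Then there exists an invertible matrix S ∈ A_ρ such that S^{-1}FS consists of diagonal matrices for every F ∈ F. -/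
open Matrix Polynomial

namespace Stmt5Aux

variable {n : ℕ}

local notation "M" => Matrix (Fin n) (Fin n) ℂ

/-- Conjugation by a unit as an algebra homomorphism. -/
private noncomputable def conjAH (u : (Matrix (Fin n) (Fin n) ℂ)ˣ) :
    Matrix (Fin n) (Fin n) ℂ →ₐ[ℂ] Matrix (Fin n) (Fin n) ℂ where
  toFun X := ↑u * X * ↑u⁻¹
  map_one' := by
    show (u : Matrix (Fin n) (Fin n) ℂ) * 1 * ((u⁻¹ : (Matrix (Fin n) (Fin n) ℂ)ˣ) : Matrix (Fin n) (Fin n) ℂ) = 1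
    rw [mul_one, Units.mul_inv]
  map_mul' X Y := by
    show (u : Matrix (Fin n) (Fin n) ℂ) * (X * Y) * ((u⁻¹ : (Matrix (Fin n) (Fin n) ℂ)ˣ) : Matrix (Fin n) (Fin n) ℂ)
      = ((u : Matrix (Fin n) (Fin n) ℂ) * X * ((u⁻¹ : (Matrix (Fin n) (Fin n) ℂ)ˣ) : Matrix (Fin n) (Fin n) ℂ)) * ((u : Matrix (Fin n) (Fin n) ℂ) * Y * ((u⁻¹ : (Matrix (Fin n) (Fin n) ℂ)ˣ) : Matrix (Fin n) (Fin n) ℂ))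
    calc (u : Matrix (Fin n) (Fin n) ℂ) * (X * Y) * ↑u⁻¹
        = ↑u * (X * (↑u⁻¹ * (↑u * Y))) * ↑u⁻¹ := by
          rw [Units.inv_mul_cancel_left]
      _ = ↑u * X * ↑u⁻¹ * (↑u * Y * ↑u⁻¹) := by
          simp only [mul_assoc]
  map_zero' := by
    show (u : Matrix (Fin n) (Fin n) ℂ) * 0 * ((u⁻¹ : (Matrix (Fin n) (Fin n) ℂ)ˣ) : Matrix (Fin n) (Fin n) ℂ) = 0
    simp
  map_add' X Y := by
    show (u : Matrix (Fin n) (Fin n) ℂ) * (X + Y) * ((u⁻¹ : (Matrix (Fin n) (Fin n) ℂ)ˣ) : Matrix (Fin n) (Fin n) ℂ) = _ + _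
    simp [mul_add, add_mul]
  commutes' r := by
    show (u : Matrix (Fin n) (Fin n) ℂ) * algebraMap ℂ _ r * ((u⁻¹ : (Matrix (Fin n) (Fin n) ℂ)ˣ) : Matrix (Fin n) (Fin n) ℂ) = algebraMap ℂ _ r
    rw [Algebra.algebraMap_eq_smul_one, mul_smul_comm, mul_one, smul_mul_assoc,
      Units.mul_inv]

private lemma inv_mem_of_isUnit (B : Subalgebra ℂ (Matrix (Fin n) (Fin n) ℂ))
    {u : Matrix (Fin n) (Fin n) ℂ} (hu : u ∈ B) (h : IsUnit u) : u⁻¹ ∈ B := by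
  classical
  let L : B →ₗ[ℂ] B :=
    { toFun := fun x => ⟨u * x, B.mul_mem hu x.2⟩
      map_add' := fun x y => by ext; simp [mul_add]
      map_smul' := fun c x => by ext; simp [mul_smul_comm] }
  have hinj : Function.Injective L := by
    intro x y hxy
    have h1 : u * (x : Matrix (Fin n) (Fin n) ℂ) = u * y := congrArg Subtype.val hxy
    exact Subtype.ext (h.mul_left_cancel h1)
  have hsurj : Function.Surjective L := (LinearMap.injective_iff_surjective).1 hinj
  obtain ⟨x, hx⟩ := hsurj ⟨1, B.one_mem⟩
  have hx1 : u * (x : Matrix (Fin n) (Fin n) ℂ) = 1 := congrArg Subtype.val hx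
  have : u⁻¹ = (x : Matrix (Fin n) (Fin n) ℂ) := Matrix.inv_eq_right_inv hx1
  rw [this]; exact x.2

private lemma eigenprojs (hn : 0 < n) (A : Matrix (Fin n) (Fin n) ℂ)
    (hd : ∃ S : Matrix (Fin n) (Fin n) ℂ, IsUnit S ∧ (S⁻¹ * A * S).IsDiag) :
    ∃ (s : Finset ℂ) (E : ℂ → Matrix (Fin n) (Fin n) ℂ),
      (∀ μ, E μ ∈ Algebra.adjoin ℂ ({A} : Set (Matrix (Fin n) (Fin n) ℂ))) ∧
      (∀ μ ∈ s, E μ * E μ = E μ) ∧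
      (∀ μ ∈ s, ∀ ν ∈ s, μ ≠ ν → E μ * E ν = 0) ∧
      (∑ μ ∈ s, E μ = 1) ∧
      (∀ μ ∈ s, A * E μ = μ • E μ) := by
  classical
  obtain ⟨S, hS, hdiag⟩ := hd
  lift S to (Matrix (Fin n) (Fin n) ℂ)ˣ using hS
  set V : Matrix (Fin n) (Fin n) ℂ := ↑S with hVdef
  set W : Matrix (Fin n) (Fin n) ℂ := ↑S⁻¹ with hWdef
  have hVW : V * W = 1 := Units.mul_inv S
  have hWV : W * V = 1 := Units.inv_mul S
  have hSinv : V⁻¹ = W := by rw [hVdef, hWdef, Matrix.coe_units_inv]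
  set d : Fin n → ℂ := Matrix.diag (V⁻¹ * A * V) with hddef
  have hN : Matrix.diagonal d = V⁻¹ * A * V := hdiag.diagonal_diag
  have hA : A = V * Matrix.diagonal d * W := by
    rw [hN, hSinv, ← mul_assoc, ← mul_assoc, hVW, one_mul, mul_assoc, hVW, mul_one]
  set s : Finset ℂ := Finset.image d Finset.univ with hsdef
  have hds : ∀ i, d i ∈ s := fun i => Finset.mem_image_of_mem d (Finset.mem_univ i)
  set E : ℂ → Matrix (Fin n) (Fin n) ℂ := fun μ => aeval A (Lagrange.basis s id μ) with hEdef
  -- aeval computation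
  have haev : ∀ p : ℂ[X], aeval A p = V * (Matrix.diagonal fun i => p.eval (d i)) * W := by
    intro p
    have h1 : aeval A p = conjAH S (aeval (Matrix.diagonal d) p) := by
      conv_lhs => rw [hA]
      exact aeval_algHom_apply (conjAH S) (Matrix.diagonal d) p
    have h2 : aeval (Matrix.diagonal d) p = Matrix.diagonal fun i => p.eval (d i) := by
      have h3 : aeval (Matrix.diagonal d) p
          = (Matrix.diagonalAlgHom ℂ : (Fin n → ℂ) →ₐ[ℂ] Matrix (Fin n) (Fin n) ℂ) (aeval d p) :=
        aeval_algHom_apply (Matrix.diagonalAlgHom ℂ : (Fin n → ℂ) →ₐ[ℂ] Matrix (Fin n) (Fin n) ℂ) d p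
      rw [h3]
      have h4 : aeval d p = fun i => p.eval (d i) := by
        funext i
        have h5 := aeval_algHom_apply (Pi.evalAlgHom ℂ (fun _ : Fin n => ℂ) i) d p
        exact h5.symm.trans (congrFun (Polynomial.coe_aeval_eq_eval (d i)) p)
      rw [h4]
      rfl
    rw [h1, h2]
    rfl
  have key : ∀ μ ∈ s,
      E μ = V * (Matrix.diagonal fun i => if d i = μ then (1 : ℂ) else 0) * W := by
    intro μ hμ
    rw [hEdef]
    simp only [haev]
    have hfun : (fun i => Polynomial.eval (d i) (Lagrange.basis s id μ))
        = fun i => if d i = μ then (1:ℂ) else 0 := by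
      funext i
      by_cases h : d i = μ
      · rw [if_pos h, h]
        simpa using Lagrange.eval_basis_self (Set.injOn_id _) hμ
      · rw [if_neg h]
        have h8 := Lagrange.eval_basis_of_ne (v := id) (s := s)
          (fun hc : μ = d i => h hc.symm) (hds i)
        simpa using h8
    rw [hfun]
  have hmul : ∀ X Y : Matrix (Fin n) (Fin n) ℂ,
      (V * X * W) * (V * Y * W) = V * (X * Y) * W := by
    intro X Y
    exact (map_mul (conjAH S) X Y).symm
  refine ⟨s, E, ?_, ?_, ?_, ?_, ?_⟩
  · intro μ
    rw [hEdef, Algebra.adjoin_singleton_eq_range_aeval]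
    exact ⟨Lagrange.basis s id μ, rfl⟩
  · intro μ hμ
    rw [key μ hμ, hmul, Matrix.diagonal_mul_diagonal]
    have hfun2 : (fun i => (if d i = μ then (1:ℂ) else 0) * if d i = μ then (1:ℂ) else 0)
        = fun i => if d i = μ then (1:ℂ) else 0 := by
      funext i
      by_cases h : d i = μ <;> simp [h]
    rw [hfun2]
  · intro μ hμ ν hν hne
    rw [key μ hμ, key ν hν, hmul, Matrix.diagonal_mul_diagonal]
    have hz : (fun i => (if d i = μ then (1:ℂ) else 0) * if d i = ν then (1:ℂ) else 0)
        = fun _ : Fin n => (0:ℂ) := by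
      funext i
      by_cases h : d i = μ
      · simp [h, hne]
      · simp [h]
    rw [hz]
    have hdz : Matrix.diagonal (fun _ : Fin n => (0:ℂ)) = 0 := by
      simp [Matrix.diagonal_zero]
    rw [hdz, mul_zero, zero_mul]
  · have hsne : s.Nonempty := ⟨d ⟨0, hn⟩, hds _⟩
    rw [hEdef]
    rw [← _root_.map_sum (aeval A) (fun μ => Lagrange.basis s id μ) s]
    rw [Lagrange.sum_basis (Set.injOn_id _) hsne]
    exact Polynomial.aeval_one A
  · intro μ hμ
    rw [key μ hμ]
    nth_rewrite 1 [hA]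
    rw [hmul, Matrix.diagonal_mul_diagonal]
    have hfun : (fun i => d i * if d i = μ then (1:ℂ) else 0)
        = μ • fun i => if d i = μ then (1:ℂ) else 0 := by
      funext i
      by_cases h : d i = μ <;> simp [h, mul_comm]
    rw [hfun, Matrix.diagonal_smul, mul_smul_comm, smul_mul_assoc]

private lemma listProjs (hn : 0 < n) (L : List (Matrix (Fin n) (Fin n) ℂ))
    (hcommL : ∀ A ∈ L, ∀ B ∈ L, Commute A B)
    (hdiagL : ∀ A ∈ L, ∃ S : Matrix (Fin n) (Fin n) ℂ, IsUnit S ∧ (S⁻¹ * A * S).IsDiag) :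
    ∃ (ι : Type) (_ : Fintype ι) (P : ι → Matrix (Fin n) (Fin n) ℂ),
      (∀ k, P k ∈ Algebra.adjoin ℂ {x : Matrix (Fin n) (Fin n) ℂ | x ∈ L}) ∧
      (∀ k, P k * P k = P k) ∧
      (∀ k l, k ≠ l → P k * P l = 0) ∧
      (∑ k, P k = 1) ∧
      (∀ A ∈ L, ∀ k, ∃ μ : ℂ, A * P k = μ • P k) := by
  classical
  induction L with
  | nil =>
    refine ⟨PUnit, inferInstance, fun _ => 1, ?_, by simp, ?_, by simp, by simp⟩
    · intro k; exact Subalgebra.one_mem _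
    · intro k l h; exact absurd (Subsingleton.elim k l) h
  | cons A L' ih =>
    obtain ⟨ι, hι, P, hPmem, hPidem, hProth, hPsum, hPsc⟩ :=
      ih (fun X hX Y hY => hcommL X (List.mem_cons_of_mem _ hX) Y (List.mem_cons_of_mem _ hY))
        (fun X hX => hdiagL X (List.mem_cons_of_mem _ hX))
    obtain ⟨s, E, hEmem, hEidem, hEorth, hEsum, hEsc⟩ :=
      eigenprojs hn A (hdiagL A List.mem_cons_self)
    have hAmem : A ∈ (A :: L') := List.mem_cons_self
    -- commutation facts
    have hPA : ∀ k, Commute A (P k) := by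
      intro k
      have hle : Algebra.adjoin ℂ {x : Matrix (Fin n) (Fin n) ℂ | x ∈ L'}
          ≤ Subalgebra.centralizer ℂ {A} := by
        apply Algebra.adjoin_le
        intro C hC
        show C ∈ Subalgebra.centralizer ℂ {A}
        rw [Subalgebra.mem_centralizer_iff]
        intro g hg
        rw [Set.mem_singleton_iff] at hg
        rw [hg]
        exact (hcommL A hAmem C (List.mem_cons_of_mem _ hC)).eq
      have := hle (hPmem k)
      rw [Subalgebra.mem_centralizer_iff] at this
      exact this A rfl
    have hEC : ∀ μ, ∀ C ∈ L', Commute C (E μ) := by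
      intro μ C hC
      have hle : Algebra.adjoin ℂ ({A} : Set (Matrix (Fin n) (Fin n) ℂ))
          ≤ Subalgebra.centralizer ℂ {C} := by
        apply Algebra.adjoin_le
        intro x hx
        rw [Set.mem_singleton_iff] at hx
        rw [hx]
        show A ∈ Subalgebra.centralizer ℂ {C}
        rw [Subalgebra.mem_centralizer_iff]
        intro g hg
        rw [Set.mem_singleton_iff] at hg
        rw [hg]
        exact (hcommL C (List.mem_cons_of_mem _ hC) A hAmem).eq
      have := hle (hEmem μ)
      rw [Subalgebra.mem_centralizer_iff] at this
      exact this C rfl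
    have hPE : ∀ k μ, Commute (P k) (E μ) := by
      intro k μ
      have hle : Algebra.adjoin ℂ {x : Matrix (Fin n) (Fin n) ℂ | x ∈ L'}
          ≤ Subalgebra.centralizer ℂ {E μ} := by
        apply Algebra.adjoin_le
        intro C hC
        show C ∈ Subalgebra.centralizer ℂ {E μ}
        rw [Subalgebra.mem_centralizer_iff]
        intro g hg
        rw [Set.mem_singleton_iff] at hg
        rw [hg]
        exact (hEC μ C hC).symm.eq
      have := hle (hPmem k)
      rw [Subalgebra.mem_centralizer_iff] at this
      exact (this (E μ) rfl).symm
    have hsetins : {x : Matrix (Fin n) (Fin n) ℂ | x ∈ A :: L'}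
        = insert A {x : Matrix (Fin n) (Fin n) ℂ | x ∈ L'} := by
      ext x; simp [List.mem_cons]
    refine ⟨ι × ↥s, inferInstance, fun kμ => P kμ.1 * E ↑kμ.2, ?_, ?_, ?_, ?_, ?_⟩
    · rintro ⟨k, μ⟩
      rw [hsetins]
      refine Subalgebra.mul_mem _ ?_ ?_
      · exact Algebra.adjoin_mono (Set.subset_insert _ _) (hPmem k)
      · refine Algebra.adjoin_mono ?_ (hEmem ↑μ)
        intro x hx
        rw [hx]
        exact Set.mem_insert _ _
    · rintro ⟨k, μ⟩
      rw [(hPE k ↑μ).symm.mul_mul_mul_comm, hPidem k, hEidem ↑μ μ.2]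
    · rintro ⟨k, μ⟩ ⟨l, ν⟩ hne
      rw [(hPE l ↑μ).symm.mul_mul_mul_comm]
      by_cases h : k = l
      · subst h
        have hμν : (μ : ℂ) ≠ ↑ν := by
          intro hc
          exact hne (by rw [Prod.ext_iff]; exact ⟨rfl, Subtype.ext hc⟩)
        rw [hEorth ↑μ μ.2 ↑ν ν.2 hμν, mul_zero]
      · rw [hProth k l h, zero_mul]
    · rw [Fintype.sum_prod_type]
      have : ∀ k, ∑ μ : ↥s, P k * E ↑μ = P k := by
        intro k
        rw [← Finset.mul_sum]
        rw [Finset.sum_coe_sort s E, hEsum, mul_one]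
      simp only [this]
      exact hPsum
    · intro B hB
      rcases List.mem_cons.1 hB with rfl | hB'
      · rintro ⟨k, μ⟩
        refine ⟨↑μ, ?_⟩
        rw [← mul_assoc, (hPA k).eq, mul_assoc, hEsc ↑μ μ.2, mul_smul_comm]
      · rintro ⟨k, μ⟩
        obtain ⟨c, hc⟩ := hPsc B hB' k
        refine ⟨c, ?_⟩
        rw [← mul_assoc, hc, smul_mul_assoc]

end Stmt5Aux

open Stmt5Aux

theorem stmt_5 {n : ℕ} (ρ : Fin n → Fin n → Prop)
    (hρrefl : ∀ i, ρ i i) (hρtrans : ∀ i j k, ρ i j → ρ j k → ρ i k)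
    (Aρ : Set (Matrix (Fin n) (Fin n) ℂ))
    (hAρ : Aρ = {X | ∀ i j, X i j ≠ 0 → ρ i j})
    (F : Set (Matrix (Fin n) (Fin n) ℂ)) (hFsub : F ⊆ Aρ)
    (hcomm : ∀ A ∈ F, ∀ B ∈ F, Commute A B)
    (hdiagz : ∀ A ∈ F, ∃ S : Matrix (Fin n) (Fin n) ℂ, IsUnit S ∧ (S⁻¹ * A * S).IsDiag) :
    ∃ S : Matrix (Fin n) (Fin n) ℂ, S ∈ Aρ ∧ IsUnit S ∧ S⁻¹ ∈ Aρ ∧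
      ∀ A ∈ F, (S⁻¹ * A * S).IsDiag := by
  classical
  rcases Nat.eq_zero_or_pos n with hn | hn
  · subst hn
    refine ⟨1, ?_, isUnit_one, ?_, ?_⟩
    · rw [hAρ]; intro i j; exact i.elim0
    · rw [hAρ]; intro i j; exact i.elim0
    · intro A hA i j _; exact i.elim0
  -- the structural subalgebra
  let Sρ : Subalgebra ℂ (Matrix (Fin n) (Fin n) ℂ) :=
    { carrier := {X | ∀ i j, X i j ≠ 0 → ρ i j}
      mul_mem' := by
        intro X Y hX hY i j hne
        rw [Matrix.mul_apply] at hne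
        obtain ⟨k, -, hk⟩ := Finset.exists_ne_zero_of_sum_ne_zero hne
        exact hρtrans i k j (hX i k (left_ne_zero_of_mul hk)) (hY k j (right_ne_zero_of_mul hk))
      add_mem' := by
        intro X Y hX hY i j hne
        by_cases h : X i j = 0
        · exact hY i j (by
            intro h'
            exact hne (by simp [Matrix.add_apply, h, h']))
        · exact hX i j h
      algebraMap_mem' := by
        intro r i j hne
        rw [Matrix.algebraMap_matrix_apply] at hne
        by_cases h : i = j
        · subst h; exact hρrefl i
        · rw [if_neg h] at hne
          exact absurd rfl hne }
  have hAS : Aρ = (Sρ : Set (Matrix (Fin n) (Fin n) ℂ)) := hAρ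
  -- finite spanning subset
  obtain ⟨b, hbF, hbspan, hbli⟩ := exists_linearIndependent ℂ F
  have hbfin : b.Finite := hbli.setFinite
  set L : List (Matrix (Fin n) (Fin n) ℂ) := hbfin.toFinset.toList with hLdef
  have hLmem : ∀ x, x ∈ L ↔ x ∈ b := by
    intro x
    rw [hLdef, Finset.mem_toList, Set.Finite.mem_toFinset]
  have hLsub : ∀ x ∈ L, x ∈ F := fun x hx => hbF ((hLmem x).1 hx)
  obtain ⟨ι, hι, P, hPmem, hPidem, hProth, hPsum, hPsc⟩ :=
    listProjs hn L
      (fun X hX Y hY => hcomm X (hLsub X hX) Y (hLsub Y hY))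
      (fun X hX => hdiagz X (hLsub X hX))
  have hPS : ∀ k, P k ∈ Sρ := by
    intro k
    refine Algebra.adjoin_le ?_ (hPmem k)
    intro x hx
    have : x ∈ Aρ := hFsub (hLsub x hx)
    rw [hAS] at this
    exact this
  -- choose columns via multilinearity of det
  let w : Fin n → ι → (Fin n → ℂ) := fun j k => fun i => P k i j
  have h1 : Matrix.detRowAlternating (fun j => ∑ k : ι, w j k) = 1 := by
    have hw : (fun j => ∑ k : ι, w j k) = (1 : Matrix (Fin n) (Fin n) ℂ)ᵀ := by
      funext j i
      have : (∑ k : ι, w j k) i = ∑ k : ι, P k i j := by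
        rw [Finset.sum_apply]
      rw [this, ← Matrix.sum_apply i j Finset.univ (fun k => P k), hPsum]
      rfl
    rw [hw]
    show Matrix.det _ = 1
    rw [Matrix.det_transpose, Matrix.det_one]
  have h2 : ∑ r : Fin n → ι, Matrix.detRowAlternating (fun j => w j (r j)) = 1 := by
    have hms := (Matrix.detRowAlternating (R := ℂ) (n := Fin n)).toMultilinearMap.map_sum (g := w)
    simp only [AlternatingMap.coe_multilinearMap] at hms
    rw [← hms, h1]
  obtain ⟨kf, hkf⟩ : ∃ r : Fin n → ι, Matrix.detRowAlternating (fun j => w j (r j)) ≠ 0 := by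
    by_contra h
    push_neg at h
    rw [Finset.sum_eq_zero (fun r _ => h r)] at h2
    exact one_ne_zero h2.symm
  set T : Matrix (Fin n) (Fin n) ℂ := Matrix.of fun i j => P (kf j) i j with hTdef
  have hdetT : T.det ≠ 0 := by
    have : Tᵀ = Matrix.of fun j => w j (kf j) := rfl
    intro h
    apply hkf
    show Matrix.det (Matrix.of fun j => w j (kf j)) = 0
    rw [← this, Matrix.det_transpose, h]
  have hTunit : IsUnit T := (Matrix.isUnit_iff_isUnit_det T).2 (isUnit_iff_ne_zero.2 hdetT)
  have hTmem : T ∈ Sρ := fun i j hne => hPS (kf j) i j hne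
  have hTinv : T⁻¹ ∈ Sρ := inv_mem_of_isUnit Sρ hTmem hTunit
  have hTT : T⁻¹ * T = 1 := Matrix.nonsing_inv_mul T (isUnit_iff_ne_zero.2 hdetT)
  -- key conjugation computation
  have hconj : ∀ X ∈ Submodule.span ℂ {x : Matrix (Fin n) (Fin n) ℂ | x ∈ L},
      (T⁻¹ * X * T).IsDiag := by
    intro X hX
    induction hX using Submodule.span_induction with
    | mem x hx =>
      choose μ hμ using hPsc x hx
      have hXT : x * T = T * Matrix.diagonal (fun j => μ (kf j)) := by
        ext i j
        rw [Matrix.mul_apply, Matrix.mul_diagonal]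
        have : ∑ m, x i m * T m j = (x * P (kf j)) i j := by
          rw [Matrix.mul_apply]; rfl
        rw [this, hμ (kf j)]
        simp [Matrix.smul_apply, smul_eq_mul, mul_comm, hTdef]
      rw [mul_assoc, hXT, ← mul_assoc, hTT, one_mul]
      exact Matrix.isDiag_diagonal _
    | zero => simp only [mul_zero, zero_mul]; exact Matrix.isDiag_zero
    | add x y _ _ hx hy =>
      have : T⁻¹ * (x + y) * T = T⁻¹ * x * T + T⁻¹ * y * T := by
        rw [mul_add, add_mul]
      rw [this]
      exact hx.add hy
    | smul c x _ hx =>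
      have : T⁻¹ * (c • x) * T = c • (T⁻¹ * x * T) := by
        rw [Matrix.mul_smul, Matrix.smul_mul]
      rw [this]
      exact hx.smul c
  refine ⟨T, ?_, hTunit, ?_, ?_⟩
  · rw [hAS]; exact hTmem
  · rw [hAS]; exact hTinv
  · intro A hA
    apply hconj
    have hLb : {x : Matrix (Fin n) (Fin n) ℂ | x ∈ L} = b := by
      ext x; exact hLmem x
    rw [hLb, hbspan]
    exact Submodule.subset_span hA
end

section
/- Let ρ be a quasi-order on {1,...,n} and g : ρ → ℂ* a transitive map. Then g is trivial (separates through some s : {1,...,n} → ℂ*) if and only if there exists an invertible matrix T ∈ M_n such that the induced automorphism g* of A_ρ equals X ↦ TXT^{-1}; in this case T may be chosen diagonal. -/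
open Matrix

lemma stmt6_fwd {n : ℕ} (ρ : Fin n → Fin n → Prop)
    (g : Fin n → Fin n → ℂ)
    (Aρ : Set (Matrix (Fin n) (Fin n) ℂ))
    (hAρ : Aρ = {X | ∀ i j, X i j ≠ 0 → ρ i j})
    (gstar : Matrix (Fin n) (Fin n) ℂ → Matrix (Fin n) (Fin n) ℂ)
    (hgstar : ∀ X, gstar X = Matrix.of fun i j => g i j * X i j)
    (s : Fin n → ℂ) (hs : ∀ i, s i ≠ 0) (hgs : ∀ i j, ρ i j → g i j = s i / s j) :
    IsUnit (Matrix.diagonal s) ∧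
      ∀ X ∈ Aρ, gstar X = Matrix.diagonal s * X * (Matrix.diagonal s)⁻¹ := by
  have hunit : IsUnit (Matrix.diagonal s) := by
    rw [Matrix.isUnit_iff_isUnit_det, Matrix.det_diagonal, isUnit_iff_ne_zero,
      Finset.prod_ne_zero_iff]
    exact fun i _ => hs i
  refine ⟨hunit, fun X hX => ?_⟩
  have hdet := (Matrix.isUnit_iff_isUnit_det _).mp hunit
  rw [← Matrix.mul_one (gstar X), ← Matrix.mul_nonsing_inv _ hdet, ← Matrix.mul_assoc]
  congr 1
  rw [hgstar]
  ext k l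
  rw [Matrix.mul_diagonal, Matrix.diagonal_mul, Matrix.of_apply]
  by_cases hX0 : X k l = 0
  · simp [hX0]
  · have hρkl : ρ k l := by
      rw [hAρ] at hX
      exact hX k l hX0
    rw [hgs k l hρkl]
    field_simp
    exact mul_div_cancel_right₀ _ (hs l)

theorem stmt_6 {n : ℕ} (ρ : Fin n → Fin n → Prop)
    (hρrefl : ∀ i, ρ i i) (hρtrans : ∀ i j k, ρ i j → ρ j k → ρ i k)
    (g : Fin n → Fin n → ℂ)
    (hg0 : ∀ i j, ρ i j → g i j ≠ 0)
    (hgtrans : ∀ i j k, ρ i j → ρ j k → g i j * g j k = g i k)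
    (Aρ : Set (Matrix (Fin n) (Fin n) ℂ))
    (hAρ : Aρ = {X | ∀ i j, X i j ≠ 0 → ρ i j})
    (gstar : Matrix (Fin n) (Fin n) ℂ → Matrix (Fin n) (Fin n) ℂ)
    (hgstar : ∀ X, gstar X = Matrix.of fun i j => g i j * X i j) :
    ((∃ s : Fin n → ℂ, (∀ i, s i ≠ 0) ∧ ∀ i j, ρ i j → g i j = s i / s j) ↔
      (∃ T : Matrix (Fin n) (Fin n) ℂ, IsUnit T ∧ ∀ X ∈ Aρ, gstar X = T * X * T⁻¹)) ∧
    ((∃ s : Fin n → ℂ, (∀ i, s i ≠ 0) ∧ ∀ i j, ρ i j → g i j = s i / s j) →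
      ∃ T : Matrix (Fin n) (Fin n) ℂ, IsUnit T ∧ T.IsDiag ∧ ∀ X ∈ Aρ, gstar X = T * X * T⁻¹) := by
  constructor
  · constructor
    · rintro ⟨s, hs, hgs⟩
      obtain ⟨h1, h2⟩ := stmt6_fwd ρ g Aρ hAρ gstar hgstar s hs hgs
      exact ⟨_, h1, h2⟩
    · rintro ⟨T, hT, hTX⟩
      have hTdet : IsUnit T.det := (Matrix.isUnit_iff_isUnit_det T).mp hT
      -- key equation: for X ∈ Aρ, gstar X * T = T * X
      have key : ∀ X ∈ Aρ, gstar X * T = T * X := by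
        intro X hX
        rw [hTX X hX, Matrix.mul_assoc, Matrix.mul_assoc, Matrix.nonsing_inv_mul T hTdet,
          Matrix.mul_one]
      -- std basis matrices belong to Aρ when ρ i j
      have hmem : ∀ i j, ρ i j → Matrix.single i j (1 : ℂ) ∈ Aρ := by
        intro i j hij
        rw [hAρ]
        intro k l hkl
        by_cases h1 : i = k
        · by_cases h2 : j = l
          · subst h1; subst h2; exact hij
          · exfalso; apply hkl; simp [Matrix.single, h2]
        · exfalso; apply hkl; simp [Matrix.single, h1]
      -- gstar of a std basis matrix
      have hgE : ∀ i j, gstar (Matrix.single i j (1 : ℂ)) =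
          g i j • Matrix.single i j (1 : ℂ) := by
        intro i j
        rw [hgstar]
        ext k l
        by_cases h1 : i = k
        · by_cases h2 : j = l
          · subst h1; subst h2; simp [Matrix.single]
          · simp [Matrix.single, h2]
        · simp [Matrix.single, h1]
      -- entrywise form of the key equation for std basis matrices
      have entry : ∀ i j, ρ i j → ∀ k l,
          g i j * (if i = k then T j l else 0) = (if j = l then T k i else 0) := by
        intro i j hij k l
        have := key _ (hmem i j hij)
        rw [hgE i j] at this
        have h2 := congrFun (congrFun this k) l
        rw [Matrix.smul_mul, Matrix.smul_apply, Matrix.mul_apply, Matrix.mul_apply] at h2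
        simpa [Matrix.single, Finset.mul_sum, ite_and] using h2
      -- g i i = 1
      have hgone : ∀ i, g i i = 1 := by
        intro i
        have h := hgtrans i i i (hρrefl i) (hρrefl i)
        have h0 := hg0 i i (hρrefl i)
        have : g i i * g i i = g i i * 1 := by rw [mul_one]; exact h
        exact mul_left_cancel₀ h0 this
      -- T is diagonal
      have hdiag : ∀ k i, k ≠ i → T k i = 0 := by
        intro k i hki
        have := entry i i (hρrefl i) k i
        simp [hgone i, Ne.symm hki] at this
        exact this.symm
      -- T diagonal entries nonzero
      have hTeq : T = Matrix.diagonal (fun i => T i i) := by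
        ext k l
        by_cases h : k = l
        · subst h; simp
        · rw [Matrix.diagonal_apply_ne _ h]; exact hdiag k l h
      have hTnz : ∀ i, T i i ≠ 0 := by
        intro i
        have : T.det ≠ 0 := hTdet.ne_zero
        rw [hTeq, Matrix.det_diagonal] at this
        intro h
        exact this (Finset.prod_eq_zero (Finset.mem_univ i) h)
      refine ⟨fun i => T i i, hTnz, fun i j hij => ?_⟩
      have := entry i j hij i j
      simp at this
      rw [eq_div_iff (hTnz j)]
      exact this
  · rintro ⟨s, hs, hgs⟩
    obtain ⟨h1, h2⟩ := stmt6_fwd ρ g Aρ hAρ gstar hgstar s hs hgs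
    exact ⟨Matrix.diagonal s, h1, Matrix.isDiag_diagonal s, h2⟩
end

section
/- Let A_ρ ⊆ M_n be a structural matrix algebra and φ : A_ρ → M_n a Jordan homomorphism such that φ(E_{ij}) ≠ 0 for all (i,j) ∈ ρ and φ restricted to diagonal matrices is the identity. Then for every (i,j) ∈ ρ with i ≠ j, there exist scalars α, β ∈ ℂ, exactly one of which is zero, such that φ(E_{ij}) = αE_{ij} + βE_{ji}. -/
open Matrix

theorem stmt_9 {n : ℕ} (ρ : Fin n → Fin n → Prop)
    (hρrefl : ∀ i, ρ i i) (hρtrans : ∀ i j k, ρ i j → ρ j k → ρ i k)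
    (Aρ : Set (Matrix (Fin n) (Fin n) ℂ))
    (hAρ : Aρ = {X | ∀ i j, X i j ≠ 0 → ρ i j})
    (φ : Matrix (Fin n) (Fin n) ℂ →ₗ[ℂ] Matrix (Fin n) (Fin n) ℂ)
    (hJ : ∀ X ∈ Aρ, ∀ Y ∈ Aρ, φ (X * Y + Y * X) = φ X * φ Y + φ Y * φ X)
    (hne : ∀ i j, ρ i j → φ (Matrix.single i j (1 : ℂ)) ≠ 0)
    (hdiag : ∀ d : Fin n → ℂ, φ (Matrix.diagonal d) = Matrix.diagonal d) :
    ∀ i j, ρ i j → i ≠ j →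
      ∃ α β : ℂ, ((α = 0 ∧ β ≠ 0) ∨ (α ≠ 0 ∧ β = 0)) ∧
        φ (Matrix.single i j (1 : ℂ)) =
          α • Matrix.single i j (1 : ℂ) + β • Matrix.single j i (1 : ℂ) := by
  have sbm : ∀ (p q a b : Fin n) (c : ℂ),
      Matrix.single p q c a b = if p = a ∧ q = b then c else 0 := fun _ _ _ _ _ => rfl
  intro i j hij hne_ij
  set F := φ (Matrix.single i j (1 : ℂ)) with hF
  have hEmem : Matrix.single i j (1 : ℂ) ∈ Aρ := by
    rw [hAρ]
    intro a b hab
    rw [sbm] at hab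
    by_cases h : i = a ∧ j = b
    · exact h.1 ▸ h.2 ▸ hij
    · rw [if_neg h] at hab; exact absurd rfl hab
  have hDmem : ∀ d : Fin n → ℂ, Matrix.diagonal d ∈ Aρ := by
    intro d
    rw [hAρ]
    intro a b hab
    by_cases h : a = b
    · exact h ▸ hρrefl a
    · exact absurd (Matrix.diagonal_apply_ne d h) hab
  -- Jordan relation with diagonal matrices
  have key : ∀ d : Fin n → ℂ, (d i + d j) • F = F * Matrix.diagonal d + Matrix.diagonal d * F := by
    intro d
    have hmat : Matrix.single i j (1 : ℂ) * Matrix.diagonal d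
        + Matrix.diagonal d * Matrix.single i j (1 : ℂ)
        = (d i + d j) • Matrix.single i j (1 : ℂ) := by
      ext a b
      simp only [Matrix.add_apply, Matrix.mul_diagonal, Matrix.diagonal_mul,
        Matrix.smul_apply, smul_eq_mul, sbm]
      by_cases h : i = a ∧ j = b
      · obtain ⟨rfl, rfl⟩ := h
        rw [if_pos ⟨rfl, rfl⟩]; ring
      · rw [if_neg h]; ring
    have h0 := hJ _ hEmem (Matrix.diagonal d) (hDmem d)
    rw [hdiag, hmat, LinearMap.map_smul] at h0
    exact h0
  -- entrywise consequences
  have entry : ∀ (k a b : Fin n), F a b ≠ 0 →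
      ((if a = k then (1:ℂ) else 0) + (if b = k then (1:ℂ) else 0))
        = (if i = k then (1:ℂ) else 0) + (if j = k then (1:ℂ) else 0) := by
    intro k a b hab
    have h1 := key (fun x => if x = k then (1:ℂ) else 0)
    have h2 := congrFun (congrFun h1 a) b
    simp only [Matrix.smul_apply, Matrix.add_apply, Matrix.mul_diagonal,
      Matrix.diagonal_mul, smul_eq_mul] at h2
    have h3 : ((if i = k then (1:ℂ) else 0) + (if j = k then (1:ℂ) else 0)) * F a b
        = ((if a = k then (1:ℂ) else 0) + (if b = k then (1:ℂ) else 0)) * F a b := by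
      rw [h2]
      have hik : ∀ x : Fin n, (if x = k then (1:ℂ) else 0) = (if x = k then (1:ℂ) else 0) := fun _ => rfl
      split_ifs <;> ring
    have h4 := mul_right_cancel₀ hab h3
    · exact h4.symm
  -- rewrite entry with k = i, j using i ≠ j
  have hik : (if i = i then (1:ℂ) else 0) = 1 := if_pos rfl
  -- F a b = 0 unless (a,b) = (i,j) or (j,i)
  have hzero : ∀ a b, ¬(a = i ∧ b = j) → ¬(a = j ∧ b = i) → F a b = 0 := by
    intro a b h1 h2
    by_contra hab
    have hi := entry i a b hab
    have hj := entry j a b hab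
    have e1 : (if i = i then (1:ℂ) else 0) = 1 := if_pos rfl
    have e2 : (if j = i then (1:ℂ) else 0) = 0 := if_neg (fun h => hne_ij h.symm)
    have e3 : (if i = j then (1:ℂ) else 0) = 0 := if_neg hne_ij
    have e4 : (if j = j then (1:ℂ) else 0) = 1 := if_pos rfl
    rw [e1, e2, add_zero] at hi
    rw [e3, e4, zero_add] at hj
    by_cases hai : a = i
    · rw [if_pos hai] at hi
      by_cases hbj : b = j
      · exact h1 ⟨hai, hbj⟩
      · rw [if_neg hbj] at hj
        by_cases haj : a = j
        · exact hne_ij (hai ▸ haj)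
        · rw [if_neg haj] at hj; norm_num at hj
    · rw [if_neg hai] at hi
      by_cases hbi : b = i
      · rw [if_pos hbi] at hi
        by_cases haj : a = j
        · exact h2 ⟨haj, hbi⟩
        · rw [if_neg haj] at hj
          by_cases hbj : b = j
          · exact hne_ij (hbi.symm.trans hbj)
          · rw [if_neg hbj] at hj; norm_num at hj
      · rw [if_neg hbi] at hi; norm_num at hi
  -- F squared is zero
  have hF2 : F * F = 0 := by
    have h0 := hJ _ hEmem _ hEmem
    rw [Matrix.single_mul_single_of_ne (c := (1 : ℂ)) i j i (Ne.symm hne_ij) 1] at h0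
    simp only [add_zero, zero_add, map_zero] at h0
    have h2 : (2 : ℂ) • (F * F) = 0 := by rw [two_smul]; exact h0.symm
    rcases smul_eq_zero.mp h2 with h | h
    · norm_num at h
    · exact h
  refine ⟨F i j, F j i, ?_, ?_⟩
  · -- exactly one is zero
    have hprod : F i j * F j i = 0 := by
      have h0 := congrFun (congrFun hF2 i) i
      simp only [Matrix.mul_apply, Matrix.zero_apply] at h0
      rw [Finset.sum_eq_single j] at h0
      · exact h0
      · intro k _ hkj
        have hk : F i k = 0 := by
          apply hzero
          · rintro ⟨_, h⟩; exact hkj h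
          · rintro ⟨h, _⟩; exact hne_ij h
        rw [hk]; ring
      · intro h; exact absurd (Finset.mem_univ j) h
    have hnz : ¬(F i j = 0 ∧ F j i = 0) := by
      rintro ⟨h1, h2⟩
      apply hne i j hij
      rw [← hF]
      ext a b
      rw [Matrix.zero_apply]
      by_cases hab1 : a = i ∧ b = j
      · obtain ⟨rfl, rfl⟩ := hab1; exact h1
      · by_cases hab2 : a = j ∧ b = i
        · obtain ⟨rfl, rfl⟩ := hab2; exact h2
        · exact hzero a b hab1 hab2
    rcases mul_eq_zero.mp hprod with h | h
    · left; exact ⟨h, fun h2 => hnz ⟨h, h2⟩⟩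
    · right; exact ⟨fun h1 => hnz ⟨h1, h⟩, h⟩
  · ext a b
    simp only [Matrix.add_apply, Matrix.smul_apply, smul_eq_mul, sbm]
    by_cases hab1 : a = i ∧ b = j
    · obtain ⟨rfl, rfl⟩ := hab1
      simp [hne_ij, hne_ij.symm]
    · by_cases hab2 : a = j ∧ b = i
      · obtain ⟨rfl, rfl⟩ := hab2
        simp [hne_ij, hne_ij.symm]
      · rw [hzero a b hab1 hab2,
          if_neg (fun h => hab1 ⟨h.1.symm, h.2.symm⟩),
          if_neg (fun h => hab2 ⟨h.1.symm, h.2.symm⟩)]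
        ring
end

section
/- Let ρ be a quasi-order on {1,...,n} and g : ρ → ℂ* a transitive map. The induced automorphism g* : A_ρ → A_ρ preserves rank-one matrices if and only if for every rectangle (i,j),(i,l),(k,j),(k,l) ∈ ρ (with i ≠ k, j ≠ l) we have g(i,j)g(k,l) − g(i,l)g(k,j) = 0. -/
open Matrix

lemma aux_rank_one {N : ℕ} (A : Matrix (Fin N) (Fin N) ℂ) :
    A.rank = 1 ↔ ∃ u v : Fin N → ℂ, u ≠ 0 ∧ v ≠ 0 ∧ ∀ i j, A i j = u i * v j := by
  constructor
  · intro h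
    have h' := h
    rw [Matrix.rank] at h'
    obtain ⟨w, hw0, hw⟩ := finrank_eq_one_iff'.mp h'
    choose c hc using fun j => hw ⟨A.mulVecLin (Pi.single j 1), LinearMap.mem_range_self _ _⟩
    have hA : ∀ i j, A i j = (w : Fin N → ℂ) i * c j := by
      intro i j
      have := congrArg (fun (x : LinearMap.range A.mulVecLin) => (x : Fin N → ℂ) i) (hc j)
      simp only [Submodule.coe_smul, Pi.smul_apply, smul_eq_mul] at this
      have h2 : A.mulVecLin (Pi.single j 1) i = A i j := by
        simp [Matrix.mulVecLin_apply, Matrix.mulVec_single]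
      rw [← h2, ← this]; ring
    refine ⟨(w : Fin N → ℂ), c, ?_, ?_, hA⟩
    · simpa [Submodule.coe_eq_zero] using hw0
    · intro hc0
      have hA0 : A = 0 := by
        ext i j; rw [hA i j, hc0]; simp
      rw [hA0, Matrix.rank_zero] at h
      exact one_ne_zero h.symm
  · rintro ⟨u, v, hu, hv, hA⟩
    have key : ∀ x, A.mulVecLin x = (∑ j, v j * x j) • u := by
      intro x
      ext i
      simp only [Matrix.mulVecLin_apply, Matrix.mulVec, dotProduct, Pi.smul_apply,
        smul_eq_mul, Finset.sum_mul]
      exact Finset.sum_congr rfl fun b _ => by rw [hA]; ring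
    have hrange : LinearMap.range A.mulVecLin = Submodule.span ℂ {u} := by
      apply le_antisymm
      · rintro _ ⟨x, rfl⟩
        rw [key]
        exact Submodule.smul_mem _ _ (Submodule.mem_span_singleton_self u)
      · rw [Submodule.span_le, Set.singleton_subset_iff]
        obtain ⟨j₀, hj₀⟩ := Function.ne_iff.mp hv
        simp only [Pi.zero_apply] at hj₀
        refine ⟨(v j₀)⁻¹ • (Pi.single j₀ 1 : Fin N → ℂ), ?_⟩
        rw [key]
        simp only [Pi.smul_apply, smul_eq_mul]
        rw [Finset.sum_eq_single j₀]
        · rw [Pi.single_eq_same, mul_one, mul_inv_cancel₀ hj₀, one_smul]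
        · intro b _ hb; simp [Pi.single_apply, hb]
        · simp
    rw [Matrix.rank, hrange, finrank_span_singleton hu]

theorem stmt_13 {n : ℕ} (ρ : Fin n → Fin n → Prop)
    (hρrefl : ∀ i, ρ i i) (hρtrans : ∀ i j k, ρ i j → ρ j k → ρ i k)
    (Aρ : Set (Matrix (Fin n) (Fin n) ℂ))
    (hAρ : Aρ = {X | ∀ i j, X i j ≠ 0 → ρ i j})
    (g : Fin n → Fin n → ℂ)
    (hg0 : ∀ i j, ρ i j → g i j ≠ 0)
    (hgtrans : ∀ i j k, ρ i j → ρ j k → g i j * g j k = g i k)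
    (gstar : Matrix (Fin n) (Fin n) ℂ → Matrix (Fin n) (Fin n) ℂ)
    (hgstar : ∀ X, gstar X = Matrix.of fun i j => g i j * X i j) :
    (∀ X ∈ Aρ, X.rank = 1 → (gstar X).rank = 1) ↔
      (∀ i j k l : Fin n, ρ i j → ρ i l → ρ k j → ρ k l → i ≠ k → j ≠ l →
        g i j * g k l - g i l * g k j = 0) := by
  constructor
  · intro h i j k l hij hil hkj hkl hik hjl
    classical
    set u : Fin n → ℂ := fun a => if a = i ∨ a = k then 1 else 0 with hu_def
    set v : Fin n → ℂ := fun b => if b = j ∨ b = l then 1 else 0 with hv_def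
    set X : Matrix (Fin n) (Fin n) ℂ := Matrix.of fun a b => u a * v b with hX_def
    have hXmem : X ∈ Aρ := by
      rw [hAρ]
      intro a b hab
      simp only [hX_def, Matrix.of_apply, hu_def, hv_def] at hab
      by_cases ha : a = i ∨ a = k
      · by_cases hb : b = j ∨ b = l
        · rcases ha with rfl | rfl <;> rcases hb with rfl | rfl <;> assumption
        · simp [hb] at hab
      · simp [ha] at hab
    have hXrank : X.rank = 1 := by
      rw [aux_rank_one]
      refine ⟨u, v, ?_, ?_, fun a b => rfl⟩
      · intro h0
        have : u i = 0 := by rw [h0]; rfl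
        simp [hu_def] at this
      · intro h0
        have : v j = 0 := by rw [h0]; rfl
        simp [hv_def] at this
    have hG := h X hXmem hXrank
    rw [hgstar, aux_rank_one] at hG
    obtain ⟨u', v', _, _, hGuv⟩ := hG
    have e1 := hGuv i j
    have e2 := hGuv i l
    have e3 := hGuv k j
    have e4 := hGuv k l
    simp only [Matrix.of_apply, hX_def, hu_def, hv_def, true_or, or_true, if_true,
      mul_one] at e1 e2 e3 e4
    rw [e1, e2, e3, e4]
    ring
  · intro h X hXmem hXrank
    rw [hgstar, aux_rank_one]
    rw [aux_rank_one] at hXrank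
    obtain ⟨u, v, hu, hv, hXuv⟩ := hXrank
    rw [hAρ] at hXmem
    obtain ⟨i₀, hi₀⟩ := Function.ne_iff.mp hu
    obtain ⟨j₀, hj₀⟩ := Function.ne_iff.mp hv
    simp only [Pi.zero_apply] at hi₀ hj₀
    have hρ : ∀ a b, u a ≠ 0 → v b ≠ 0 → ρ a b := by
      intro a b ha hb
      exact hXmem a b (by rw [hXuv]; exact mul_ne_zero ha hb)
    have hg00 : g i₀ j₀ ≠ 0 := hg0 _ _ (hρ _ _ hi₀ hj₀)
    refine ⟨fun a => g a j₀ * u a, fun b => (g i₀ j₀)⁻¹ * (g i₀ b * v b), ?_, ?_, ?_⟩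
    · intro h0
      have : g i₀ j₀ * u i₀ = 0 := congrFun h0 i₀
      exact (mul_ne_zero hg00 hi₀) this
    · intro h0
      have : (g i₀ j₀)⁻¹ * (g i₀ j₀ * v j₀) = 0 := congrFun h0 j₀
      exact (mul_ne_zero (inv_ne_zero hg00) (mul_ne_zero hg00 hj₀)) this
    · intro a b
      rw [Matrix.of_apply, hXuv]
      show g a b * (u a * v b) = (g a j₀ * u a) * ((g i₀ j₀)⁻¹ * (g i₀ b * v b))
      by_cases ha : u a = 0
      · rw [ha]; ring
      by_cases hb : v b = 0
      · rw [hb]; ring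
      have key : g a b * g i₀ j₀ = g a j₀ * g i₀ b := by
        by_cases hai : a = i₀
        · subst hai; ring
        by_cases hbj : b = j₀
        · subst hbj; ring
        linear_combination h a b i₀ j₀ (hρ _ _ ha hb) (hρ _ _ ha hj₀) (hρ _ _ hi₀ hb)
          (hρ _ _ hi₀ hj₀) hai hbj
      field_simp
      linear_combination key
end

section
/- Let A_ρ ⊆ M_n be a structural matrix algebra, P ∈ Z(A_ρ) a central idempotent, and X ∈ A_ρ. Then rank(X) = rank(PX + (I−P)X^t). -/
open Matrix

private lemma rank_add_proj {n : ℕ} (P A B : Matrix (Fin n) (Fin n) ℂ)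
    (hPA : P * A = A) (hAP : A * P = A) (hPB : P * B = 0) (hBP : B * P = 0) :
    (A + B).rank = A.rank + B.rank := by
  have hrange : LinearMap.range (A + B).mulVecLin =
      LinearMap.range A.mulVecLin ⊔ LinearMap.range B.mulVecLin := by
    apply le_antisymm
    · rintro u ⟨v, rfl⟩
      rw [mulVecLin_apply, add_mulVec]
      exact Submodule.add_mem_sup ⟨v, rfl⟩ ⟨v, rfl⟩
    · rw [sup_le_iff]
      constructor
      · rintro u ⟨v, rfl⟩
        refine ⟨P.mulVec v, ?_⟩
        rw [mulVecLin_apply, mulVecLin_apply, mulVec_mulVec, Matrix.add_mul, hAP, hBP,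
          add_zero]
      · rintro u ⟨v, rfl⟩
        refine ⟨(1 - P).mulVec v, ?_⟩
        have h1 : A * (1 - P) = 0 := by rw [Matrix.mul_sub, Matrix.mul_one, hAP, sub_self]
        have h2 : B * (1 - P) = B := by rw [Matrix.mul_sub, Matrix.mul_one, hBP, sub_zero]
        rw [mulVecLin_apply, mulVecLin_apply, mulVec_mulVec, Matrix.add_mul, h1, h2,
          zero_add]
  have hdisj : LinearMap.range A.mulVecLin ⊓ LinearMap.range B.mulVecLin = ⊥ := by
    rw [Submodule.eq_bot_iff]
    rintro u ⟨⟨v, hv⟩, ⟨w, hw⟩⟩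
    have h1 : P.mulVec u = u := by
      rw [← hv, mulVecLin_apply, mulVec_mulVec, hPA]
    have h2 : P.mulVec u = 0 := by
      rw [← hw, mulVecLin_apply, mulVec_mulVec, hPB, zero_mulVec]
    rw [← h1, h2]
  have := Submodule.finrank_sup_add_finrank_inf_eq
    (LinearMap.range A.mulVecLin) (LinearMap.range B.mulVecLin)
  rw [hdisj, finrank_bot, add_zero] at this
  rw [Matrix.rank, Matrix.rank, Matrix.rank, hrange, this]

theorem stmt_15 {n : ℕ} (ρ : Fin n → Fin n → Prop)
    (hρrefl : ∀ i, ρ i i) (hρtrans : ∀ i j k, ρ i j → ρ j k → ρ i k)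
    (Aρ : Set (Matrix (Fin n) (Fin n) ℂ))
    (hAρ : Aρ = {X | ∀ i j, X i j ≠ 0 → ρ i j})
    (P : Matrix (Fin n) (Fin n) ℂ) (hP : P ∈ Aρ) (hPidem : P * P = P)
    (hPcentral : ∀ X ∈ Aρ, Commute P X)
    (X : Matrix (Fin n) (Fin n) ℂ) (hX : X ∈ Aρ) :
    X.rank = (P * X + (1 - P) * Xᵀ).rank := by
  -- P is diagonal
  have hdiag : ∀ i j : Fin n, i ≠ j → P i j = 0 := by
    intro i j hij
    have hmem : (Matrix.single j j (1 : ℂ)) ∈ Aρ := by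
      rw [hAρ]
      intro a b hab
      have h1 : j = a ∧ j = b := by
        by_contra h
        exact hab (Matrix.single_apply_of_ne _ _ _ _ _ h)
      obtain ⟨rfl, rfl⟩ := h1
      exact hρrefl _
    have hc := hPcentral _ hmem
    have := congrFun (congrFun hc.eq i) j
    simpa [Matrix.mul_apply, Matrix.single, Finset.sum_ite_eq, Finset.sum_ite_eq',
      hij, Ne.symm hij] using this
  have hPt : Pᵀ = P := by
    ext i j
    rcases eq_or_ne i j with rfl | h
    · simp
    · simp [Matrix.transpose_apply, hdiag _ _ h, hdiag _ _ (Ne.symm h)]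
  have hcomm : P * X = X * P := hPcentral X hX
  have hcommT : P * Xᵀ = Xᵀ * P := by
    have := congrArg Matrix.transpose hcomm
    rw [Matrix.transpose_mul, Matrix.transpose_mul, hPt] at this
    exact this.symm
  -- decompose X
  have hXdec : X = P * X + (1 - P) * X := by
    rw [Matrix.sub_mul, Matrix.one_mul]; abel
  have hYdec : P * X + (1 - P) * Xᵀ = P * X + (1 - P) * Xᵀ := rfl
  have hA1 : P * (P * X) = P * X := by rw [← Matrix.mul_assoc, hPidem]
  have hA2 : (P * X) * P = P * X := by
    rw [hcomm, Matrix.mul_assoc, ← hcomm, ← Matrix.mul_assoc, ← hcomm, Matrix.mul_assoc, ← hcomm, ← Matrix.mul_assoc, hPidem]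
  have hB1 : P * ((1 - P) * X) = 0 := by
    rw [← Matrix.mul_assoc, Matrix.mul_sub, Matrix.mul_one, hPidem, sub_self, Matrix.zero_mul]
  have hB2 : ((1 - P) * X) * P = 0 := by
    rw [Matrix.mul_assoc, ← hcomm, ← Matrix.mul_assoc, Matrix.sub_mul, Matrix.one_mul, hPidem, sub_self, Matrix.zero_mul]
  have hB1' : P * ((1 - P) * Xᵀ) = 0 := by
    rw [← Matrix.mul_assoc, Matrix.mul_sub, Matrix.mul_one, hPidem, sub_self, Matrix.zero_mul]
  have hB2' : ((1 - P) * Xᵀ) * P = 0 := by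
    rw [Matrix.mul_assoc, ← hcommT, ← Matrix.mul_assoc, Matrix.sub_mul, Matrix.one_mul, hPidem, sub_self, Matrix.zero_mul]
  have h1 : X.rank = (P * X).rank + ((1 - P) * X).rank := by
    conv_lhs => rw [hXdec]
    exact rank_add_proj P (P * X) ((1 - P) * X) hA1 hA2 hB1 hB2
  have h2 : (P * X + (1 - P) * Xᵀ).rank = (P * X).rank + ((1 - P) * Xᵀ).rank :=
    rank_add_proj P (P * X) ((1 - P) * Xᵀ) hA1 hA2 hB1' hB2'
  have h3 : ((1 - P) * Xᵀ).rank = ((1 - P) * X).rank := by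
    have ht : ((1 - P) * X)ᵀ = (1 - P) * Xᵀ := by
      rw [Matrix.transpose_mul, Matrix.transpose_sub, Matrix.transpose_one, hPt,
        Matrix.mul_sub, Matrix.mul_one, ← hcommT, Matrix.sub_mul, Matrix.one_mul]
    rw [← ht, Matrix.rank_transpose]
  rw [h1, h2, h3]
end

section
/- Let ρ be a quasi-order on {1,...,n}, let ≈ be the transitive closure of ρ ∪ ρ^t, and suppose distinct a, b ∈ {1,...,n} satisfy a ≈ b. Then there exist m ∈ ℕ and distinct elements a = i₀, i₁, ..., i_m = b such that the consecutive pairs form an alternating zigzag chain lying in ρ \ Δ: i.e., one of the four patterns holds: (i₀,i₁),(i₂,i₁),(i₂,i₃),(i₄,i₃),... in ρ\Δ ending appropriately at b, or the corresponding patterns with the first pair reversed. -/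
def stepOK {n : ℕ} (ρ : Fin n → Fin n → Prop) (d : Bool) (k : ℕ) (x y : Fin n) : Prop :=
  if decide (Even k) = d then (ρ x y ∧ x ≠ y) else (ρ y x ∧ y ≠ x)

theorem key {n : ℕ} (ρ : Fin n → Fin n → Prop)
    (hρtrans : ∀ i j k, ρ i j → ρ j k → ρ i k)
    (a b : Fin n)
    (h : Relation.ReflTransGen (fun i j => ρ i j ∨ ρ j i) a b) :
    a ≠ b → ∃ m : ℕ, 1 ≤ m ∧ ∃ i : ℕ → Fin n,
      (∀ k l, k ≤ m → l ≤ m → i k = i l → k = l) ∧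
      i 0 = a ∧ i m = b ∧
      ∃ d : Bool, ∀ k < m, stepOK ρ d k (i k) (i (k+1)) := by
  induction h with
  | refl => intro hab; exact absurd rfl hab
  | @tail c b h' step ih =>
    intro hab
    rcases eq_or_ne c b with rfl | hcb
    · exact ih hab
    rcases eq_or_ne a c with rfl | hac
    · -- one-step chain
      refine ⟨1, le_refl 1, fun k => if k = 0 then a else b, ?_, by simp, by simp, ?_⟩
      · intro k l hk hl he
        interval_cases k <;> interval_cases l <;> simp_all
      · rcases step with hs | hs
        · refine ⟨true, ?_⟩
          intro k hk
          interval_cases k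
          simp only [if_pos rfl, if_neg one_ne_zero]
          rw [stepOK, if_pos (by simp)]
          exact ⟨hs, hab⟩
        · refine ⟨false, ?_⟩
          intro k hk
          interval_cases k
          simp only [if_pos rfl, if_neg one_ne_zero]
          rw [stepOK, if_neg (by simp)]
          exact ⟨hs, Ne.symm hab⟩
    obtain ⟨m, hm1, i, hinj, hi0, him, d, halt⟩ := ih hac
    by_cases hbmem : ∃ k ≤ m, i k = b
    · -- truncate
      obtain ⟨k, hk, hik⟩ := hbmem
      have hk1 : 1 ≤ k := by
        rcases Nat.eq_zero_or_pos k with rfl | h; · rw [hi0] at hik; exact absurd hik hab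
        omega
      exact ⟨k, hk1, i, fun p q hp hq => hinj p q (hp.trans hk) (hq.trans hk),
        hi0, hik, d, fun p hp => halt p (lt_of_lt_of_le hp hk)⟩
    push_neg at hbmem
    obtain ⟨m', rfl⟩ : ∃ m', m = m' + 1 := ⟨m - 1, by omega⟩
    have hlast := halt m' (by omega)
    rw [him] at hlast
    have hflip : decide (Even (m' + 1)) = !decide (Even m') := by
      simp only [Nat.even_add_one, decide_not]
    by_cases hpar : decide (Even (m' + 1)) = d
    · rcases step with hs | hs
      · -- append forward
        refine ⟨m' + 2, by omega, fun k => if k ≤ m' + 1 then i k else b, ?_, ?_, ?_, d, ?_⟩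
        · intro k l hk hl he
          by_cases h1 : k ≤ m' + 1 <;> by_cases h2 : l ≤ m' + 1 <;> simp only [h1, h2, if_pos, if_neg, if_true, if_false] at he
          · exact hinj k l h1 h2 he
          · exact absurd he (hbmem k h1)
          · exact absurd he.symm (hbmem l h2)
          · omega
        · simp [hi0]
        · simp
        · intro k hk
          rcases Nat.lt_succ_iff_lt_or_eq.mp hk with hk' | hkeq
          · simp only []
            rw [if_pos (show k ≤ m' + 1 by omega), if_pos (show k + 1 ≤ m' + 1 by omega)]
            exact halt k hk'
          · simp only [hkeq]
            rw [if_pos (le_refl (m' + 1)), if_neg (show ¬ m' + 1 + 1 ≤ m' + 1 by omega), him]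
            rw [stepOK, if_pos hpar]
            exact ⟨hs, hcb⟩
      · -- compose backward: last step is backward
        have hm'd : ¬ decide (Even m') = d := by
          rw [hflip] at hpar
          revert hpar
          cases hx : decide (Even m') <;> cases d <;> simp
        rw [stepOK, if_neg hm'd] at hlast
        have hρb : ρ b (i m') := hρtrans _ _ _ hs hlast.1
        refine ⟨m' + 1, by omega, fun k => if k = m' + 1 then b else i k, ?_, ?_, ?_, d, ?_⟩
        · intro k l hk hl he
          by_cases h1 : k = m' + 1 <;> by_cases h2 : l = m' + 1 <;> simp only [h1, h2, if_pos, if_neg, if_true, if_false] at he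
          · omega
          · exact absurd he.symm (hbmem l (by omega))
          · exact absurd he (hbmem k (by omega))
          · exact hinj k l hk hl he
        · simp [show ¬ (0 : ℕ) = m' + 1 by omega, hi0]
        · simp
        · intro k hk
          rcases Nat.lt_succ_iff_lt_or_eq.mp hk with hk' | hkeq
          · simp only []
            rw [if_neg (show ¬ k = m' + 1 by omega), if_neg (show ¬ k + 1 = m' + 1 by omega)]
            exact halt k (by omega)
          · simp only [hkeq]
            rw [if_neg (show ¬ m' = m' + 1 by omega), if_pos trivial]
            rw [stepOK, if_neg hm'd]
            exact ⟨hρb, Ne.symm (hbmem m' (by omega))⟩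
    · rcases step with hs | hs
      · -- compose forward: last step is forward
        have hm'd : decide (Even m') = d := by
          rw [hflip] at hpar
          revert hpar
          cases hx : decide (Even m') <;> cases d <;> simp
        rw [stepOK, if_pos hm'd] at hlast
        have hρb : ρ (i m') b := hρtrans _ _ _ hlast.1 hs
        refine ⟨m' + 1, by omega, fun k => if k = m' + 1 then b else i k, ?_, ?_, ?_, d, ?_⟩
        · intro k l hk hl he
          by_cases h1 : k = m' + 1 <;> by_cases h2 : l = m' + 1 <;> simp only [h1, h2, if_pos, if_neg, if_true, if_false] at he
          · omega
          · exact absurd he.symm (hbmem l (by omega))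
          · exact absurd he (hbmem k (by omega))
          · exact hinj k l hk hl he
        · simp [show ¬ (0 : ℕ) = m' + 1 by omega, hi0]
        · simp
        · intro k hk
          rcases Nat.lt_succ_iff_lt_or_eq.mp hk with hk' | hkeq
          · simp only []
            rw [if_neg (show ¬ k = m' + 1 by omega), if_neg (show ¬ k + 1 = m' + 1 by omega)]
            exact halt k (by omega)
          · simp only [hkeq]
            rw [if_neg (show ¬ m' = m' + 1 by omega), if_pos trivial]
            rw [stepOK, if_pos hm'd]
            exact ⟨hρb, hbmem m' (by omega)⟩
      · -- append backward
        refine ⟨m' + 2, by omega, fun k => if k ≤ m' + 1 then i k else b, ?_, ?_, ?_, d, ?_⟩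
        · intro k l hk hl he
          by_cases h1 : k ≤ m' + 1 <;> by_cases h2 : l ≤ m' + 1 <;> simp only [h1, h2, if_pos, if_neg, if_true, if_false] at he
          · exact hinj k l h1 h2 he
          · exact absurd he (hbmem k h1)
          · exact absurd he.symm (hbmem l h2)
          · omega
        · simp [hi0]
        · simp
        · intro k hk
          rcases Nat.lt_succ_iff_lt_or_eq.mp hk with hk' | hkeq
          · simp only []
            rw [if_pos (show k ≤ m' + 1 by omega), if_pos (show k + 1 ≤ m' + 1 by omega)]
            exact halt k hk'
          · simp only [hkeq]
            rw [if_pos (le_refl (m' + 1)), if_neg (show ¬ m' + 1 + 1 ≤ m' + 1 by omega), him]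
            rw [stepOK, if_neg hpar]
            exact ⟨hs, Ne.symm hcb⟩

theorem stmt_16 {n : ℕ} (ρ : Fin n → Fin n → Prop)
    (hρrefl : ∀ i, ρ i i) (hρtrans : ∀ i j k, ρ i j → ρ j k → ρ i k)
    (a b : Fin n) (hab : a ≠ b)
    (h : Relation.ReflTransGen (fun i j => ρ i j ∨ ρ j i) a b) :
    ∃ m : ℕ, 1 ≤ m ∧ ∃ i : ℕ → Fin n,
      (∀ k l, k ≤ m → l ≤ m → i k = i l → k = l) ∧
      i 0 = a ∧ i m = b ∧
      ((∀ k < m, if Even k then (ρ (i k) (i (k+1)) ∧ i k ≠ i (k+1))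
                 else (ρ (i (k+1)) (i k) ∧ i (k+1) ≠ i k)) ∨
       (∀ k < m, if Even k then (ρ (i (k+1)) (i k) ∧ i (k+1) ≠ i k)
                 else (ρ (i k) (i (k+1)) ∧ i k ≠ i (k+1)))) := by
  obtain ⟨m, hm, i, hinj, hi0, him, d, halt⟩ := key ρ hρtrans a b h hab
  refine ⟨m, hm, i, hinj, hi0, him, ?_⟩
  cases d with
  | false =>
    right; intro k hk
    have h1 := halt k hk
    rw [stepOK] at h1
    by_cases he : Even k
    · rw [if_neg (by simp [he])] at h1
      rw [if_pos he]; exact h1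
    · rw [if_pos (by simp [he])] at h1
      rw [if_neg he]; exact h1
  | true =>
    left; intro k hk
    have h1 := halt k hk
    rw [stepOK] at h1
    by_cases he : Even k
    · rw [if_pos (by simp [he])] at h1
      rw [if_pos he]; exact h1
    · rw [if_neg (by simp [he])] at h1
      rw [if_neg he]; exact h1
end
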